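/- arXiv:2002.03837 — 2 statements merged into one kernel-verified Lean document; each statement's English description precedes it below -/
import Mathlib

section
/- Fix an integer q ≥ 2. Let ℓ ∈ ℤ with ℓ ≠ 0, let v ∈ ℤ[1/q], let k, m ∈ ℕ, and let u, w ∈ ℤ. Then there exists s ∈ ℕ with [[q^m, w],[0,1]] = [[q^k, u],[0,1]] · ([[q^ℓ, v],[0,1]])^s (as 2×2 matrices over ℚ) if and only if there exist x ∈ ℤ and s ∈ ℕ such that (m : ℤ) = k + ℓ·s, (w : ℚ) = u + v·x, and (q^ℓ − 1)·x = q^m − q^k in ℚ. -/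
/-- ℤ[1/q]: the set of rationals of the form a / q^n with a ∈ ℤ, n ∈ ℕ. -/
def ZInvQ (q : ℤ) : Set ℚ := {x : ℚ | ∃ (a : ℤ) (n : ℕ), x = (a : ℚ) / (q : ℚ) ^ n}

/-!
The matrices `[[a, b], [0, 1]]` act as affine maps `t ↦ a t + b`, so the power
`[[q^ℓ, v], [0, 1]]^s` is `[[q^(ℓ s), v X], [0, 1]]` with the geometric sum
`X = ∑_{i<s} q^(ℓ i)`. Comparing entries, the matrix equation says `m = k + ℓ s` and
`w = u + v x` for `x = q^k X`, and `x` is determined by `(q^ℓ - 1) x = q^m - q^k` since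
`q^ℓ ≠ 1`. The only point left is that `x = ∑_{i<s} q^(k + ℓ i)` is an integer: its exponents
lie between `k` and `k + ℓ s = m`, so none is negative.
-/

open Finset

theorem affineMatrix_inj {R : Type*} [Zero R] [One R] {a b c d : R} :
    !![a, b; 0, 1] = !![c, d; 0, 1] ↔ a = c ∧ b = d := by
  simp

theorem affineMatrix_mul {R : Type*} [Semiring R] (a b c d : R) :
    !![a, b; 0, 1] * !![c, d; 0, 1] = !![a * c, a * d + b; 0, 1] := by
  simp

theorem affineMatrix_pow {R : Type*} [CommSemiring R] (a b : R) (s : ℕ) :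
    !![a, b; 0, 1] ^ s = !![a ^ s, b * ∑ i ∈ range s, a ^ i; 0, 1] := by
  induction s with
  | zero => simp [Matrix.one_fin_two]
  | succ s ih =>
    rw [pow_succ, ih, affineMatrix_mul, sum_range_succ, pow_succ, affineMatrix_inj]
    exact ⟨rfl, by ring⟩

theorem eq_mul_geom_sum_iff {K : Type*} [CommRing K] [IsDomain K] {r : K} (hr : r ≠ 1)
    (a x : K) (s : ℕ) :
    x = a * ∑ i ∈ range s, r ^ i ↔ (r - 1) * x = a * r ^ s - a := by
  have hgeom : (r - 1) * (a * ∑ i ∈ range s, r ^ i) = a * r ^ s - a := by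
    linear_combination a * mul_geom_sum r s
  rw [← hgeom, mul_right_inj' (sub_ne_zero.mpr hr)]

theorem pow_eq_pow_mul_zpow_pow_iff {K : Type*} [Field K] [LinearOrder K] [IsStrictOrderedRing K]
    {a : K} (ha₀ : 0 < a) (ha₁ : a ≠ 1) (k m s : ℕ) (l : ℤ) :
    a ^ m = a ^ k * (a ^ l) ^ s ↔ (m : ℤ) = k + l * s := by
  rw [← zpow_natCast, ← zpow_natCast a k, ← zpow_natCast (a ^ l), ← zpow_mul,
    ← zpow_add₀ ha₀.ne', zpow_right_inj₀ ha₀ ha₁]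

theorem exists_intCast_eq_pow_mul_geom_sum {q : ℤ} (hq : q ≠ 0) {k s : ℕ} {l : ℤ}
    (hs : 0 ≤ (k : ℤ) + l * s) :
    ∃ x : ℤ, (x : ℚ) = (q : ℚ) ^ k * ∑ i ∈ range s, ((q : ℚ) ^ l) ^ i := by
  refine ⟨∑ i ∈ range s, q ^ ((k : ℤ) + l * i).toNat, ?_⟩
  push_cast
  rw [mul_sum]
  refine sum_congr rfl fun i hi => ?_
  have hexp : 0 ≤ (k : ℤ) + l * i := by
    have his : (i : ℤ) < s := by exact_mod_cast mem_range.mp hi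
    rcases le_total 0 l with hl | hl <;> nlinarith
  rw [← zpow_natCast, Int.toNat_of_nonneg hexp, zpow_add₀ (by exact_mod_cast hq), zpow_natCast,
    zpow_mul, zpow_natCast]

theorem stmt_6_general (q : ℤ) (hq : 2 ≤ q) (l : ℤ) (hl : l ≠ 0) (v : ℚ)
    (k m : ℕ) (u w : ℤ) :
    (∃ s : ℕ, !![(q : ℚ) ^ m, (w : ℚ); 0, 1] =
        !![(q : ℚ) ^ k, (u : ℚ); 0, 1] * (!![(q : ℚ) ^ l, v; 0, 1]) ^ s) ↔
    (∃ (x : ℤ) (s : ℕ), (m : ℤ) = (k : ℤ) + l * s ∧ (w : ℚ) = (u : ℚ) + v * (x : ℚ) ∧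
        ((q : ℚ) ^ l - 1) * (x : ℚ) = (q : ℚ) ^ m - (q : ℚ) ^ k) := by
  have hq₀ : (0 : ℚ) < q := by exact_mod_cast (by omega : 0 < q)
  have hq₁ : (q : ℚ) ≠ 1 := by exact_mod_cast (by omega : q ≠ 1)
  have hql : (q : ℚ) ^ l ≠ 1 := by
    rwa [Ne, ← zpow_zero (q : ℚ), zpow_right_inj₀ hq₀ hq₁]
  simp_rw [affineMatrix_pow, affineMatrix_mul, affineMatrix_inj]
  constructor
  · rintro ⟨s, hpow, hw⟩
    have hm := (pow_eq_pow_mul_zpow_pow_iff hq₀ hq₁ k m s l).mp hpow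
    obtain ⟨x, hx⟩ := exists_intCast_eq_pow_mul_geom_sum (q := q) (by omega) (hm ▸ m.cast_nonneg)
    refine ⟨x, s, hm, by rw [hw, hx]; ring, ?_⟩
    rw [hpow, ← (eq_mul_geom_sum_iff hql _ _ _).mp hx]
  · rintro ⟨x, s, hm, hw, hx⟩
    have hpow := (pow_eq_pow_mul_zpow_pow_iff hq₀ hq₁ k m s l).mpr hm
    rw [hpow] at hx
    refine ⟨s, hpow, ?_⟩
    rw [hw, (eq_mul_geom_sum_iff hql _ _ _).mpr hx]
    ring

theorem stmt_6 (q : ℤ) (hq : 2 ≤ q) (l : ℤ) (hl : l ≠ 0) (v : ℚ) (hv : v ∈ ZInvQ q)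
    (k m : ℕ) (u w : ℤ) :
    (∃ s : ℕ, !![(q : ℚ) ^ m, (w : ℚ); 0, 1] =
        !![(q : ℚ) ^ k, (u : ℚ); 0, 1] * (!![(q : ℚ) ^ l, v; 0, 1]) ^ s) ↔
    (∃ (x : ℤ) (s : ℕ), (m : ℤ) = (k : ℤ) + l * s ∧ (w : ℚ) = (u : ℚ) + v * (x : ℚ) ∧
        ((q : ℚ) ^ l - 1) * (x : ℚ) = (q : ℚ) ^ m - (q : ℚ) ^ k) :=
  stmt_6_general q hq l hl v k m u w
end

section
/- Fix an integer q ≥ 2. Let g_1, …, g_n and g be 2×2 rational matrices, each of the form [[q^k, u],[0,1]] with k ∈ ℤ and u ∈ ℤ[1/q]. Then there exist x_1, …, x_n ∈ ℕ with g_1^{x_1} · g_2^{x_2} ⋯ g_n^{x_n} = g if and only if there exist matrices h_0, h_1, …, h_n, each of the form [[q^k, u],[0,1]] with k ∈ ℕ and u ∈ ℤ (i.e., with integer entries), such that for every i ∈ {1, …, n} there exists s ∈ ℕ with h_i = h_{i−1} · g_i^s, and h_n · g^{−1} = h_0. -/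
/-- Membership in the group G: matrices [[q^k, u],[0,1]] with k ∈ ℤ, u ∈ ℤ[1/q]. -/
def InBS (q : ℤ) (A : Matrix (Fin 2) (Fin 2) ℚ) : Prop :=
  ∃ (k : ℤ) (u : ℚ), u ∈ ZInvQ q ∧ A = !![(q : ℚ) ^ k, u; 0, 1]

/-!
The partial products `p i = g 0 ^ x 0 * ⋯ * g (i-1) ^ x (i-1)` lie in `G`, and left multiplication
by `diag(q ^ N, 1)` shifts the exponent of an element of `G` by `N` and multiplies its translation
part by `q ^ N`; for `N` large it therefore moves all the `p i` into `G_ℤ` at once, giving the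
`h i`. Conversely `h i = h 0 * p i` by induction, and `h 0` is invertible, so `h n * g⁻¹ = h 0`
forces `p n = g`.
-/

open Filter

/-- The monoid `G_ℤ`. -/
def InBSInt (q : ℤ) (A : Matrix (Fin 2) (Fin 2) ℚ) : Prop :=
  ∃ (k : ℕ) (u : ℤ), A = !![(q : ℚ) ^ k, (u : ℚ); 0, 1]

section Monoid

variable {M : Type*} [Monoid M] {n : ℕ}

theorem Fin.partialProd_last (f : Fin n → M) :
    Fin.partialProd f (Fin.last n) = (List.ofFn f).prod := by
  simp [Fin.partialProd, List.take_of_length_le]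

theorem Fin.partialProd_mem {S : Type*} [SetLike S M] [SubmonoidClass S M] {s : S}
    {f : Fin n → M} (hf : ∀ i, f i ∈ s) (i : Fin (n + 1)) : Fin.partialProd f i ∈ s := by
  induction i using Fin.induction with
  | zero => simp [one_mem]
  | succ i ih => simpa [Fin.partialProd_succ] using mul_mem ih (hf i)

theorem Fin.eq_mul_partialProd {f : Fin n → M} {h : Fin (n + 1) → M}
    (hs : ∀ i, h i.succ = h i.castSucc * f i) (i : Fin (n + 1)) :
    h i = h 0 * Fin.partialProd f i := by
  induction i using Fin.induction with
  | zero => simp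
  | succ i ih => rw [hs, ih, Fin.partialProd_succ, mul_assoc]

end Monoid

/-- If `A` is singular then `A⁻¹ = 0`, so the hypothesis already forces `A` to be invertible. -/
theorem Matrix.eq_of_mul_nonsing_inv_eq_one {m K : Type*} [Fintype m] [DecidableEq m] [Field K]
    {A B : Matrix m m K} (h : B * A⁻¹ = 1) : A = B := by
  rw [← Matrix.nonsing_inv_nonsing_inv A
    (Matrix.isUnit_nonsing_inv_det_iff.mp (Matrix.isUnit_det_of_left_inverse h)),
    Matrix.inv_eq_left_inv h]

section CommRing

variable {R : Type*} [CommRing R]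

theorem Matrix.affine_mul_affine (a b c d : R) :
    !![a, b; 0, 1] * !![c, d; 0, 1] = !![a * c, a * d + b; 0, 1] := by
  rw [Matrix.mul_fin_two]
  simp

theorem Matrix.det_affine (a b : R) : (!![a, b; 0, 1]).det = a := by
  simp [Matrix.det_fin_two_of]

end CommRing

section CommGroupWithZero

variable {G₀ : Type*} [CommGroupWithZero G₀]

theorem pow_mul_div_pow_of_le {x : G₀} (hx : x ≠ 0) (a : G₀) {m N : ℕ} (h : m ≤ N) :
    x ^ N * (a / x ^ m) = a * x ^ (N - m) := by
  rw [pow_sub₀ x hx h, mul_div_assoc', div_eq_mul_inv, mul_comm (x ^ N), mul_assoc]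

theorem zpow_eq_pow_toNat_div_pow_toNat (x : G₀) (k : ℤ) :
    x ^ k = x ^ k.toNat / x ^ (-k).toNat := by
  obtain ⟨m, rfl | rfl⟩ := k.eq_nat_or_neg <;> simp

theorem eventually_pow_mul_zpow_eq_pow {x : G₀} (hx : x ≠ 0) (k : ℤ) :
    ∀ᶠ N : ℕ in atTop, ∃ j : ℕ, x ^ N * x ^ k = x ^ j := by
  filter_upwards [eventually_ge_atTop (-k).toNat] with N hN
  refine ⟨k.toNat + (N - (-k).toNat), ?_⟩
  rw [zpow_eq_pow_toNat_div_pow_toNat, pow_mul_div_pow_of_le hx _ hN, pow_add]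

end CommGroupWithZero

section BS

variable {q : ℤ}

namespace ZInvQ

theorem zpow_mem (k : ℤ) : (q : ℚ) ^ k ∈ ZInvQ q :=
  ⟨q ^ k.toNat, (-k).toNat, by push_cast; exact zpow_eq_pow_toNat_div_pow_toNat _ k⟩

theorem add_mem (hq : (q : ℚ) ≠ 0) {x y : ℚ} (hx : x ∈ ZInvQ q) (hy : y ∈ ZInvQ q) :
    x + y ∈ ZInvQ q := by
  obtain ⟨a, m, rfl⟩ := hx
  obtain ⟨b, n, rfl⟩ := hy
  refine ⟨a * q ^ n + b * q ^ m, m + n, ?_⟩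
  field_simp
  push_cast
  ring

theorem mul_mem {x y : ℚ} (hx : x ∈ ZInvQ q) (hy : y ∈ ZInvQ q) : x * y ∈ ZInvQ q := by
  obtain ⟨a, m, rfl⟩ := hx
  obtain ⟨b, n, rfl⟩ := hy
  exact ⟨a * b, m + n, by push_cast; rw [pow_add]; ring⟩

theorem eventually_pow_mul_eq_int (hq : (q : ℚ) ≠ 0) {u : ℚ} (hu : u ∈ ZInvQ q) :
    ∀ᶠ N : ℕ in atTop, ∃ a : ℤ, (q : ℚ) ^ N * u = a := by
  obtain ⟨a, m, rfl⟩ := hu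
  filter_upwards [eventually_ge_atTop m] with N hN
  exact ⟨a * q ^ (N - m), by rw [pow_mul_div_pow_of_le hq _ hN]; push_cast; ring⟩

end ZInvQ

def bsSubmonoid (hq : (q : ℚ) ≠ 0) : Submonoid (Matrix (Fin 2) (Fin 2) ℚ) where
  carrier := {A | InBS q A}
  mul_mem' := by
    rintro _ _ ⟨k, u, hu, rfl⟩ ⟨l, v, hv, rfl⟩
    refine ⟨k + l, (q : ℚ) ^ k * v + u,
      ZInvQ.add_mem hq (ZInvQ.mul_mem (ZInvQ.zpow_mem k) hv) hu, ?_⟩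
    rw [Matrix.affine_mul_affine, zpow_add₀ hq]
  one_mem' := ⟨0, 0, ⟨0, 0, by simp⟩, by simp [Matrix.one_fin_two]⟩

theorem InBS.isUnit_det (hq : (q : ℚ) ≠ 0) {A : Matrix (Fin 2) (Fin 2) ℚ} (hA : InBS q A) :
    IsUnit A.det := by
  obtain ⟨k, u, -, rfl⟩ := hA
  rw [Matrix.det_affine]
  exact (zpow_ne_zero k hq).isUnit

theorem InBSInt.isUnit (hq : (q : ℚ) ≠ 0) {A : Matrix (Fin 2) (Fin 2) ℚ} (hA : InBSInt q A) :
    IsUnit A := by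
  obtain ⟨k, u, rfl⟩ := hA
  rw [Matrix.isUnit_iff_isUnit_det, Matrix.det_affine]
  exact (pow_ne_zero k hq).isUnit

theorem InBS.eventually_inBSInt_diag_mul (hq : (q : ℚ) ≠ 0) {A : Matrix (Fin 2) (Fin 2) ℚ}
    (hA : InBS q A) : ∀ᶠ N : ℕ in atTop, InBSInt q (!![(q : ℚ) ^ N, 0; 0, 1] * A) := by
  obtain ⟨k, u, hu, rfl⟩ := hA
  filter_upwards [eventually_pow_mul_zpow_eq_pow hq k, ZInvQ.eventually_pow_mul_eq_int hq hu]
    with N ⟨j, hj⟩ ⟨a, ha⟩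
  exact ⟨j, a, by rw [Matrix.affine_mul_affine, hj, ha, add_zero]⟩

end BS

theorem stmt_12_general (q : ℤ) (hq : 2 ≤ q) (n : ℕ)
    (g : Fin n → Matrix (Fin 2) (Fin 2) ℚ) (g₀ : Matrix (Fin 2) (Fin 2) ℚ)
    (hg : ∀ i : Fin n, InBS q (g i)) :
    (∃ x : Fin n → ℕ, (List.ofFn fun i : Fin n => g i ^ x i).prod = g₀) ↔
    (∃ h : Fin (n + 1) → Matrix (Fin 2) (Fin 2) ℚ,
      (∀ i : Fin (n + 1), ∃ (k : ℕ) (u : ℤ), h i = !![(q : ℚ) ^ k, (u : ℚ); 0, 1]) ∧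
      (∀ i : Fin n, ∃ s : ℕ, h i.succ = h i.castSucc * g i ^ s) ∧
      h (Fin.last n) * g₀⁻¹ = h 0) := by
  have hq0 : (q : ℚ) ≠ 0 := by exact_mod_cast (show q ≠ 0 by omega)
  constructor
  · rintro ⟨x, rfl⟩
    set p := Fin.partialProd fun i => g i ^ x i
    have hp : ∀ i, p i ∈ bsSubmonoid hq0 :=
      Fin.partialProd_mem fun i => pow_mem (show g i ∈ bsSubmonoid hq0 from hg i) (x i)
    obtain ⟨N, hN⟩ := (eventually_all.2 fun i => (hp i).eventually_inBSInt_diag_mul hq0).exists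
    refine ⟨fun i => !![(q : ℚ) ^ N, 0; 0, 1] * p i, hN, fun i => ⟨x i, ?_⟩, ?_⟩
    · simp only [p, Fin.partialProd_succ, mul_assoc]
    · rw [← Fin.partialProd_last, mul_assoc, Matrix.mul_nonsing_inv _ ((hp _).isUnit_det hq0)]
      simp only [p, Fin.partialProd_zero, mul_one]
  · rintro ⟨h, h_int, h_step, h_last⟩
    choose s hs using h_step
    refine ⟨s, Eq.symm (Matrix.eq_of_mul_nonsing_inv_eq_one ?_)⟩
    rw [Fin.eq_mul_partialProd hs, mul_assoc, Fin.partialProd_last] at h_last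
    exact (InBSInt.isUnit hq0 (h_int 0)).mul_left_cancel (h_last.trans (mul_one _).symm)

theorem stmt_12 (q : ℤ) (hq : 2 ≤ q) (n : ℕ)
    (g : Fin n → Matrix (Fin 2) (Fin 2) ℚ) (g₀ : Matrix (Fin 2) (Fin 2) ℚ)
    (hg : ∀ i : Fin n, InBS q (g i)) (hg₀ : InBS q g₀) :
    (∃ x : Fin n → ℕ, (List.ofFn fun i : Fin n => g i ^ x i).prod = g₀) ↔
    (∃ h : Fin (n + 1) → Matrix (Fin 2) (Fin 2) ℚ,
      (∀ i : Fin (n + 1), ∃ (k : ℕ) (u : ℤ), h i = !![(q : ℚ) ^ k, (u : ℚ); 0, 1]) ∧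
      (∀ i : Fin n, ∃ s : ℕ, h i.succ = h i.castSucc * g i ^ s) ∧
      h (Fin.last n) * g₀⁻¹ = h 0) :=
  stmt_12_general q hq n g g₀ hg
end
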